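/- arXiv:1706.08387 — 2 statements merged into one kernel-verified Lean document; each statement's English description precedes it below -/
import Mathlib

section
/- Let V be an abelian group with a symmetric bilinear form (·|·) on a rational vector space containing a lattice Q, let α ∈ Q with (α|α) = 2, and let c̃ : Q → ℂ satisfy (a) c̃(γ) = (γ|β) + a for some β in the vector space and a ∈ ℂ, and (b) c̃(γ) = -c̃(r_α(γ) - α) for all γ ∈ Q, where r_α(γ) = γ - (γ|α)α. If Q spans the vector space, then c̃(γ) = C·((γ|α) + 1) for all γ ∈ Q, where C = c̃(0). -/
/-!
Write `c γ = (γ|β) + a` on `Q`. Antisymmetry at `γ = 0` (where `r_α 0 - α = -α`) gives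
`(α|β) = 2a`; antisymmetry at a general `γ`, expanded by linearity, gives
`2 (γ|β) = ((γ|α) + 1)(α|β) - 2a = 2a (γ|α)`, so `c γ = a ((γ|α) + 1)` with `a = c 0`.
-/

theorem AddSubgroup.sub_intCast_smul_sub_mem {R V : Type*} [Ring R] [AddCommGroup V]
    [Module R V] {Q : AddSubgroup V} {α γ : V} (hα : α ∈ Q) (hγ : γ ∈ Q) (k : ℤ) :
    γ - (k : R) • α - α ∈ Q := by
  rw [Int.cast_smul_eq_zsmul]
  exact Q.sub_mem (Q.sub_mem hγ (Q.zsmul_mem hα k)) hα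

theorem add_eq_mul_add_one_of_antisymm {K : Type*} [Field K] [CharZero K] {a x y t : K}
    (h₀ : a = -(-y + a)) (h : x + a = -(x - t * y - y + a)) :
    x + a = a * (t + 1) := by
  linear_combination h / 2 - (t + 1) / 2 * h₀

theorem affine_antisymmetric_is_proportional_general
    {V : Type*} [AddCommGroup V] [Module ℚ V]
    (B : V →ₗ[ℚ] V →ₗ[ℚ] ℚ)
    (Q : AddSubgroup V)
    (α : V) (hα : α ∈ Q)
    (hQint : ∀ γ ∈ Q, ∃ k : ℤ, B γ α = k)
    (c : V → ℂ) (β : V) (a : ℂ)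
    (haff : ∀ γ ∈ Q, c γ = (B γ β : ℂ) + a)
    (hanti : ∀ γ ∈ Q, c γ = -c (γ - (B γ α) • α - α)) :
    ∀ γ ∈ Q, c γ = c 0 * ((B γ α : ℂ) + 1) := by
  have hmem : ∀ γ ∈ Q, γ - B γ α • α - α ∈ Q := fun γ hγ => by
    obtain ⟨k, hk⟩ := hQint γ hγ
    exact hk ▸ AddSubgroup.sub_intCast_smul_sub_mem hα hγ k
  have hanti' : ∀ γ ∈ Q,
      (B γ β : ℂ) + a = -((B γ β : ℂ) - B γ α * B α β - B α β + a) := fun γ hγ => by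
    have h := hanti γ hγ
    rw [haff γ hγ, haff _ (hmem γ hγ)] at h
    simpa [smul_eq_mul] using h
  have hc0 : c 0 = a := by simp [haff 0 Q.zero_mem]
  intro γ hγ
  rw [haff γ hγ, hc0]
  exact add_eq_mul_add_one_of_antisymm (by simpa using hanti' 0 Q.zero_mem) (hanti' γ hγ)

/-- Key computation in the proof of Theorem 3.1 of Kac–Wakimoto: let `V` be a
rational vector space with a symmetric bilinear form `B`, `Q ⊆ V` a subgroup
(lattice) spanning `V` on which the form takes integer values against `α`, and
`α ∈ Q` with `B α α = 2`.  If `c̃ : Q → ℂ` is affine-linear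
(i.e. `c̃ γ = (γ|β) + a`) and satisfies the antisymmetry
`c̃ γ = −c̃ (r_α γ − α)` where `r_α γ = γ − (γ|α)α`, then
`c̃ γ = c̃ 0 · ((γ|α) + 1)` for all `γ ∈ Q`. -/
theorem affine_antisymmetric_is_proportional
    {V : Type*} [AddCommGroup V] [Module ℚ V]
    (B : V →ₗ[ℚ] V →ₗ[ℚ] ℚ) (hsymm : ∀ x y, B x y = B y x)
    (Q : AddSubgroup V) (hspan : Submodule.span ℚ (Q : Set V) = ⊤)
    (α : V) (hα : α ∈ Q) (hαα : B α α = 2)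
    (hQint : ∀ γ ∈ Q, ∃ k : ℤ, B γ α = k)
    (c : V → ℂ) (β : V) (a : ℂ)
    (haff : ∀ γ ∈ Q, c γ = (B γ β : ℂ) + a)
    (hanti : ∀ γ ∈ Q, c γ = -c (γ - (B γ α) • α - α)) :
    ∀ γ ∈ Q, c γ = c 0 * ((B γ α : ℂ) + 1) :=
  affine_antisymmetric_is_proportional_general B Q α hα hQint c β a haff hanti
end

section
/- Let α be a vector with (α|α) = 2 in a real inner product space, β another vector, a ∈ ℝ, and define c̃(γ) = (γ|β) + a. If c̃(γ) = -c̃(r_α(γ) - α) for all γ in a spanning set Q closed under addition, where r_α(γ) = γ - (γ|α)α, then β = ((α|β)/2)·α and a = (α|β)/2. -/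
/-!
Expanding the relation, `c γ + c (r_α γ - α) = ⟪2β - ⟪α,β⟫α, γ⟫ - (⟪α,β⟫ - 2a)`, so the linear form
`⟪2β - ⟪α,β⟫α, ·⟫` takes the constant value `⟪α,β⟫ - 2a` on `Q`. Since `Q` is nonempty and closed
under addition, that constant is `0`; since `Q` spans, the form vanishes, i.e. `2β = ⟪α,β⟫α`.
-/

open RealInnerProductSpace

theorem AddMonoidHom.eq_zero_of_forall_mem_eq {M N : Type*} [AddZeroClass M]
    [AddLeftCancelMonoid N] (f : M →+ N) {Q : Set M} (hQ : Q.Nonempty)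
    (hadd : ∀ x ∈ Q, ∀ y ∈ Q, x + y ∈ Q) {C : N} (hf : ∀ x ∈ Q, f x = C) : C = 0 := by
  obtain ⟨x, hx⟩ := hQ
  have hxx : f x + f x = f x := by rw [← map_add, hf _ (hadd x hx x hx), hf x hx]
  rw [← hf x hx]
  exact add_eq_left.mp hxx

theorem eq_zero_of_inner_eq_zero_of_span_eq_top {𝕜 E : Type*} [RCLike 𝕜] [NormedAddCommGroup E]
    [InnerProductSpace 𝕜 E] {Q : Set E} (hspan : Submodule.span 𝕜 Q = ⊤) {v : E}
    (hv : ∀ u ∈ Q, inner 𝕜 v u = 0) : v = 0 := by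
  have hform : innerₛₗ 𝕜 v = 0 := LinearMap.ext_on hspan hv
  exact inner_self_eq_zero.mp (LinearMap.congr_fun hform v)

theorem real_inner_add_inner_sub_smul_sub {V : Type*} [NormedAddCommGroup V]
    [InnerProductSpace ℝ V] (α β γ : V) :
    ⟪γ, β⟫ + ⟪γ - ⟪γ, α⟫ • α - α, β⟫ = ⟪(2 : ℝ) • β - ⟪α, β⟫ • α, γ⟫ - ⟪α, β⟫ := by
  simp only [inner_sub_left, real_inner_smul_left, real_inner_comm α γ, real_inner_comm β γ]
  ring

theorem antisymmetry_forces_beta_and_a_general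
    {V : Type*} [NormedAddCommGroup V] [InnerProductSpace ℝ V]
    (α β : V) (a : ℝ)
    (Q : Set V) (hspan : Submodule.span ℝ Q = ⊤)
    (hQ : Q.Nonempty) (hadd : ∀ x ∈ Q, ∀ y ∈ Q, x + y ∈ Q)
    (c : V → ℝ) (hc : ∀ γ, c γ = inner ℝ γ β + a)
    (hanti : ∀ γ ∈ Q, c γ = -c (γ - (inner ℝ γ α : ℝ) • α - α)) :
    β = ((inner ℝ α β : ℝ) / 2) • α ∧ a = (inner ℝ α β : ℝ) / 2 := by
  set v : V := (2 : ℝ) • β - ⟪α, β⟫ • α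
  have hconst : ∀ γ ∈ Q, ⟪v, γ⟫ = ⟪α, β⟫ - 2 * a := by
    intro γ hγ
    have h := hanti γ hγ
    rw [hc, hc] at h
    linarith [real_inner_add_inner_sub_smul_sub α β γ]
  have ha : ⟪α, β⟫ - 2 * a = 0 :=
    (innerₛₗ ℝ v).toAddMonoidHom.eq_zero_of_forall_mem_eq hQ hadd hconst
  have hv : v = 0 :=
    eq_zero_of_inner_eq_zero_of_span_eq_top hspan fun γ hγ => (hconst γ hγ).trans ha
  refine ⟨?_, by linarith⟩
  rw [div_eq_inv_mul, mul_smul, ← sub_eq_zero.mp hv, smul_smul]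
  norm_num

/-- Intermediate step in the proof of Theorem 3.1 of Kac–Wakimoto: in a real
inner product space, let `α` satisfy `⟪α,α⟫ = 2`, let `c̃ γ = ⟪γ,β⟫ + a`, and
suppose `c̃ γ = −c̃ (r_α γ − α)` for all `γ` in a spanning set `Q` closed under
addition, where `r_α γ = γ − ⟪γ,α⟫α`.  Then `β = (⟪α,β⟫/2)·α` and
`a = ⟪α,β⟫/2`. -/
theorem antisymmetry_forces_beta_and_a
    {V : Type*} [NormedAddCommGroup V] [InnerProductSpace ℝ V]
    (α β : V) (a : ℝ) (hαα : inner ℝ α α = (2 : ℝ))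
    (Q : Set V) (hspan : Submodule.span ℝ Q = ⊤)
    (hQ : Q.Nonempty) (hadd : ∀ x ∈ Q, ∀ y ∈ Q, x + y ∈ Q)
    (c : V → ℝ) (hc : ∀ γ, c γ = inner ℝ γ β + a)
    (hanti : ∀ γ ∈ Q, c γ = -c (γ - (inner ℝ γ α : ℝ) • α - α)) :
    β = ((inner ℝ α β : ℝ) / 2) • α ∧ a = (inner ℝ α β : ℝ) / 2 :=
  antisymmetry_forces_beta_and_a_general α β a Q hspan hQ hadd c hc hanti
end
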